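/- Let U be a nonempty finite set of positive integers and let p = (p_1, p_2) be an ordered partition of |U| with p' = (p_2, p_1). Then the map F ↦ F' (taking a tiered forest to its dual) is a bijection from the set of tiered forests on vertex set U with tier sizes (p_1, p_2) to the set of tiered forests on vertex set U with tier sizes (p_2, p_1). -/

import Mathlib

open Finset

attribute [local instance 10] Classical.propDecidable

noncomputable section

/-- An edge of a simple graph on `ℕ`, stored as an ordered pair `(u,v)` with `u < v` intended. -/
abbrev PEdge : Type := ℕ × ℕ

/-- A labelled edge (for multigraphs): an endpoint pair together with a label. -/
abbrev LEdge : Type := (ℕ × ℕ) × ℕ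

def adjP (E : Finset PEdge) (u v : ℕ) : Prop := (u, v) ∈ E ∨ (v, u) ∈ E

def reachP (E : Finset PEdge) : ℕ → ℕ → Prop := Relation.ReflTransGen (adjP E)

def connP (V : Finset ℕ) (E : Finset PEdge) : Prop :=
  (∀ e ∈ E, e.1 ∈ V ∧ e.2 ∈ V) ∧ ∀ u ∈ V, ∀ v ∈ V, reachP E u v

def IsTreeOn (V : Finset ℕ) (E : Finset PEdge) : Prop := connP V E ∧ E.card + 1 = V.card

/-- A graph on a finite set of naturals together with a tiering map. -/
structure PreGraph where
  V : Finset ℕ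
  E : Finset PEdge
  t : ℕ → ℕ

/-- `G` is a tiered graph with two tiers. -/
def IsTiered (G : PreGraph) : Prop :=
  (∀ v ∈ G.V, 0 < v) ∧
  (∀ e ∈ G.E, e.1 ∈ G.V ∧ e.2 ∈ G.V ∧ e.1 < e.2) ∧
  (∀ v ∈ G.V, G.t v = 1 ∨ G.t v = 2) ∧
  (∀ e ∈ G.E, G.t e.1 < G.t e.2)

/-- acyclicity: every edge is a bridge. -/
def IsForest (G : PreGraph) : Prop := ∀ e ∈ G.E, ¬ reachP (G.E.erase e) e.1 e.2

def IsTreeG (G : PreGraph) : Prop := IsTreeOn G.V G.E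

/-- the connected component (vertex set) of `x`. -/
def comp (V : Finset ℕ) (E : Finset PEdge) (x : ℕ) : Finset ℕ :=
  V.filter fun y => reachP E x y

/-- the order-reversing involution `x_i ↦ x_{s+1-i}` of a finite set `V = {x_1 < ... < x_s}`. -/
def flipMap (V : Finset ℕ) (x : ℕ) : ℕ :=
  if hx : x ∈ V then
    ((V.orderIsoOfFin rfl)
      ⟨V.card - 1 - ((V.orderIsoOfFin rfl).symm ⟨x, hx⟩).1, by
        have h := ((V.orderIsoOfFin rfl).symm ⟨x, hx⟩).isLt; omega⟩).1
  else x

/-- the dual of a (connected) tiered graph, via the global vertex ordering. -/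
def dual (G : PreGraph) : PreGraph where
  V := G.V
  E := G.E.image fun e => (flipMap G.V e.2, flipMap G.V e.1)
  t := fun x => if x ∈ G.V then 3 - G.t (flipMap G.V x) else G.t x

/-- the componentwise dual of a (possibly disconnected) tiered graph. -/
def cdual (G : PreGraph) : PreGraph where
  V := G.V
  E := G.E.image fun e => (flipMap (comp G.V G.E e.1) e.2, flipMap (comp G.V G.E e.1) e.1)
  t := fun x => if x ∈ G.V then 3 - G.t (flipMap (comp G.V G.E x) x) else G.t x

/-- the recursive weight of a tiered tree (fuel-based implementation; the recursion
depth is bounded by the number of vertices). -/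
def weightAux : ℕ → PreGraph → ℕ
  | 0, _ => 0
  | fuel + 1, T =>
    if h : 2 ≤ T.V.card then
      let v := T.V.min' (Finset.card_pos.mp (by omega))
      let V' := T.V.erase v
      let E' := T.E.filter fun e => e.1 ≠ v ∧ e.2 ≠ v
      ∑ u ∈ V'.filter (fun u => adjP T.E v u),
        (((comp V' E' u).filter fun y => y < u ∧ T.t v < T.t y).card
          + weightAux fuel ⟨comp V' E' u, E'.filter fun e => e.1 ∈ comp V' E' u, T.t⟩)
    else 0

def weight (T : PreGraph) : ℕ := weightAux T.V.card T

/-- edges of a complete tiered graph with tier 1 vertex set `A` and tier 2 vertex set `B`. -/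
def ctE2 (A B : Finset ℕ) : Finset PEdge := (A ×ˢ B).filter fun e => e.1 < e.2

/-- the edge set of the complete tiered graph determined by a two-tier tiered graph `G`. -/
def ctE (G : PreGraph) : Finset PEdge :=
  ctE2 (G.V.filter fun v => G.t v = 1) (G.V.filter fun v => G.t v = 2)

/-- edge set of the complete tiered graph on `[n]` determined by a tiering map `t`. -/
def ctEM (n : ℕ) (t : ℕ → ℕ) : Finset PEdge :=
  (Finset.Icc 1 n ×ˢ Finset.Icc 1 n).filter fun e => e.1 < e.2 ∧ t e.1 < t e.2

def extActiveP (T : Finset PEdge) (ω : PEdge → ℝ) (e : PEdge) : Prop :=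
  e ∉ T ∧ reachP T e.1 e.2 ∧ ∀ e' ∈ T, ¬ reachP (T.erase e') e.1 e.2 → ω e < ω e'

/-- external activity of the spanning forest `T` in the graph with edge set `E`. -/
def eaP (E T : Finset PEdge) (ω : PEdge → ℝ) : ℕ := (E.filter (extActiveP T ω)).card

def adjL (E : Finset LEdge) (u v : ℕ) : Prop := ∃ e ∈ E, e.1 = (u, v) ∨ e.1 = (v, u)
def reachL (E : Finset LEdge) : ℕ → ℕ → Prop := Relation.ReflTransGen (adjL E)
def connL (V : Finset ℕ) (E : Finset LEdge) : Prop := ∀ u ∈ V, ∀ v ∈ V, reachL E u v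
def IsLTree (V : Finset ℕ) (T : Finset LEdge) : Prop := connL V T ∧ T.card + 1 = V.card

def extActiveL (T : Finset LEdge) (ω : LEdge → ℝ) (e : LEdge) : Prop :=
  e ∉ T ∧ reachL T e.1.1 e.1.2 ∧ ∀ e' ∈ T, ¬ reachL (T.erase e') e.1.1 e.1.2 → ω e < ω e'

def eaL (E T : Finset LEdge) (ω : LEdge → ℝ) : ℕ := (E.filter (extActiveL T ω)).card

def omega1 (N : ℕ) (e : PEdge) : ℝ := (e.1 : ℝ) + (e.2 : ℝ) / (N : ℝ)
def omega2 (N : ℕ) (e : PEdge) : ℝ := ((N + 1 - e.2 : ℕ) : ℝ) + ((N + 1 - e.1 : ℕ) : ℝ) / (N : ℝ)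
def omegaLex (n : ℕ) (e : PEdge) : ℝ := ((e.1 * (n + 1) + e.2 : ℕ) : ℝ)

/-- representative (minimum) of the component of `x` in the forest `F` on vertex set `V`. -/
def rep (V : Finset ℕ) (F : Finset LEdge) (x : ℕ) : ℕ :=
  if hx : x ∈ V then
    (V.filter fun y => reachL F x y).min'
      ⟨x, Finset.mem_filter.mpr ⟨hx, Relation.ReflTransGen.refl⟩⟩
  else x

/-- image of an edge in the quotient graph `G • F`; the label encodes the original edge. -/
def quotEdge (ρ : ℕ → ℕ) (e : LEdge) : LEdge :=
  ((ρ e.1.1, ρ e.1.2), Nat.pair (Nat.pair e.1.1 e.1.2) e.2)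

/-- recover the original edge from a quotient edge. -/
def decodeE (e : LEdge) : LEdge :=
  (((Nat.unpair (Nat.unpair e.2).1).1, (Nat.unpair (Nat.unpair e.2).1).2), (Nat.unpair e.2).2)

/-- tiering map on `[n]` induced by `f : Fin n → Fin m` (tiers `1,...,m`). -/
def tf (n m : ℕ) (f : Fin n → Fin m) : ℕ → ℕ := fun v =>
  if h : v ∈ Finset.Icc 1 n then
    (f ⟨v - 1, by have := Finset.mem_Icc.mp h; omega⟩).1 + 1
  else 0

/-- `G` is a tiered graph with `m` tiers. -/
def IsTieredM (m : ℕ) (G : PreGraph) : Prop :=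
  (∀ e ∈ G.E, e.1 ∈ G.V ∧ e.2 ∈ G.V ∧ e.1 < e.2) ∧
  (∀ v ∈ G.V, G.t v ∈ Finset.Icc 1 m) ∧
  (∀ e ∈ G.E, G.t e.1 < G.t e.2) ∧
  (∀ i ∈ Finset.Icc 1 m, ∃ v ∈ G.V, G.t v = i)

/-- weight polynomial `P_p(q)` (recursive weight), evaluated at `q`. -/
def Pw (n m : ℕ) (p : ℕ → ℕ) (q : ℤ) : ℤ :=
  ∑ f : Fin n → Fin m,
    ∑ E ∈ ((Finset.Icc 1 n ×ˢ Finset.Icc 1 n).powerset.filter fun E =>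
        IsTreeG ⟨Finset.Icc 1 n, E, tf n m f⟩ ∧ IsTieredM m ⟨Finset.Icc 1 n, E, tf n m f⟩ ∧
        ∀ i ∈ Finset.Icc 1 m, ((Finset.Icc 1 n).filter fun v => tf n m f v = i).card = p i),
      q ^ weight ⟨Finset.Icc 1 n, E, tf n m f⟩

/-- weight polynomial `P_p(q)` with the weight of a tiered tree given by its external
activity in the complete tiered graph it determines (lexicographic edge order). -/
def PwEA (n m : ℕ) (p : ℕ → ℕ) (q : ℤ) : ℤ :=
  ∑ f : Fin n → Fin m,
    ∑ E ∈ ((Finset.Icc 1 n ×ˢ Finset.Icc 1 n).powerset.filter fun E =>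
        IsTreeG ⟨Finset.Icc 1 n, E, tf n m f⟩ ∧ IsTieredM m ⟨Finset.Icc 1 n, E, tf n m f⟩ ∧
        ∀ i ∈ Finset.Icc 1 m, ((Finset.Icc 1 n).filter fun v => tf n m f v = i).card = p i),
      q ^ eaP (ctEM n (tf n m f)) E (omegaLex n)

/-- `T^c_G(y)`: the Tutte evaluation `T_G(1,y)` (spanning tree expansion) for a connected
graph, `0` otherwise. -/
def TcP (V : Finset ℕ) (E : Finset PEdge) (ω : PEdge → ℝ) (y : ℤ) : ℤ :=
  if connP V E then ∑ T ∈ E.powerset.filter (fun T => IsTreeOn V T), y ^ eaP E T ω else 0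

/-- edge multiset of `H ∪ Q_S`: `H`-edges (labels `≠ 0`) together with the complete
tiered graph on `U` with tier-1 set `S` (labelled `0`). -/
def qE (U : Finset ℕ) (EH : Finset LEdge) (S : Finset ℕ) : Finset LEdge :=
  EH ∪ (ctE2 S (U \ S)).image fun p => (p, 0)

/-- `(S,T) ↦ (S*, T*)`: the dual quasi-tiered tree. -/
def dualTree (U : Finset ℕ) (ST : Finset ℕ × Finset LEdge) : Finset ℕ × Finset LEdge :=
  (U.filter fun v =>
      (cdual ⟨U, (ST.2.filter fun e => e.2 = 0).image Prod.fst,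
        fun w => if w ∈ ST.1 then 1 else 2⟩).t v = 1,
   (ST.2.filter fun e => e.2 ≠ 0) ∪
     (cdual ⟨U, (ST.2.filter fun e => e.2 = 0).image Prod.fst,
        fun w => if w ∈ ST.1 then 1 else 2⟩).E.image fun p => (p, 0))

/-- tiered forests on `U` with tier sizes `(p1, p2)` (tier map normalised off `U`). -/
def ForestSet (U : Finset ℕ) (p1 p2 : ℕ) : Set PreGraph :=
  {F | F.V = U ∧ IsTiered F ∧ IsForest F ∧
    (U.filter fun v => F.t v = 1).card = p1 ∧
    (U.filter fun v => F.t v = 2).card = p2 ∧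
    ∀ v, v ∉ U → F.t v = 0}

/-! The dual is governed by the involution `compFlip` sending `x_i` to `x_{s+1-i}` inside its
component. Since `x` and its image lie in the same component, `F'` has the same components as `F`
and the same involution dualises it again, so `F'' = F`; the tier sizes swap because
`t'(x) = 3 - t(x')` and `compFlip` permutes `U`. -/

lemma Finset.mem_image_of_involutive {α : Type*} [DecidableEq α] {f : α → α}
    (hf : Function.Involutive f) {s : Finset α} {x : α} : x ∈ s.image f ↔ f x ∈ s :=
  ⟨fun h => by obtain ⟨y, hy, rfl⟩ := Finset.mem_image.mp h; rwa [hf],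
    fun h => Finset.mem_image.mpr ⟨f x, h, hf x⟩⟩

lemma Finset.card_filter_comp_of_involutive {α : Type*} [DecidableEq α] {f : α → α}
    (hf : Function.Involutive f) {s : Finset α} (hs : ∀ x ∈ s, f x ∈ s) (P : α → Prop)
    [DecidablePred P] : (s.filter fun x => P (f x)).card = (s.filter P).card := by
  have hsf : s.image f = s := by
    ext x
    rw [Finset.mem_image_of_involutive hf]
    exact ⟨fun h => hf x ▸ hs _ h, hs x⟩
  rw [← Finset.card_image_of_injective _ hf.injective, ← Finset.filter_image, hsf]

section FlipMap

variable {V : Finset ℕ} {x y : ℕ}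

lemma flipMap_orderIsoOfFin (i : Fin V.card) :
    flipMap V (V.orderIsoOfFin rfl i) = V.orderIsoOfFin rfl i.rev := by
  rw [flipMap, dif_pos (Subtype.property _)]
  simp only [Subtype.coe_eta, OrderIso.symm_apply_apply]
  congr 2
  ext
  simp only [Fin.val_rev]
  omega

lemma exists_orderIsoOfFin_eq (hx : x ∈ V) : ∃ i, (V.orderIsoOfFin rfl i : ℕ) = x :=
  ⟨(V.orderIsoOfFin rfl).symm ⟨x, hx⟩, by simp⟩

lemma flipMap_mem (hx : x ∈ V) : flipMap V x ∈ V := by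
  obtain ⟨i, rfl⟩ := exists_orderIsoOfFin_eq hx
  rw [flipMap_orderIsoOfFin]
  exact Subtype.property _

lemma flipMap_involutive (V : Finset ℕ) : Function.Involutive (flipMap V) := by
  intro x
  by_cases hx : x ∈ V
  · obtain ⟨i, rfl⟩ := exists_orderIsoOfFin_eq hx
    rw [flipMap_orderIsoOfFin, flipMap_orderIsoOfFin, Fin.rev_rev]
  · have hfix : flipMap V x = x := dif_neg hx
    rw [hfix, hfix]

lemma flipMap_lt_flipMap (hx : x ∈ V) (hy : y ∈ V) (h : x < y) :
    flipMap V y < flipMap V x := by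
  obtain ⟨i, rfl⟩ := exists_orderIsoOfFin_eq hx
  obtain ⟨j, rfl⟩ := exists_orderIsoOfFin_eq hy
  rw [flipMap_orderIsoOfFin, flipMap_orderIsoOfFin, Subtype.coe_lt_coe, OrderIso.lt_iff_lt,
    Fin.rev_lt_rev]
  rwa [Subtype.coe_lt_coe, OrderIso.lt_iff_lt] at h

end FlipMap

section Reachability

variable {V : Finset ℕ} {E : Finset PEdge} {x y : ℕ}

lemma reachP_symm (h : reachP E x y) : reachP E y x :=
  Relation.ReflTransGen.mono (fun _ _ => Or.symm) _ _ (Relation.reflTransGen_swap.mpr h)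

lemma reachP_refl : reachP E x x := Relation.ReflTransGen.refl

lemma reachP_of_mem (he : (x, y) ∈ E) : reachP E x y :=
  Relation.ReflTransGen.single (Or.inl he)

lemma comp_eq_of_reachP (h : reachP E x y) : comp V E x = comp V E y := by
  ext z
  simp only [comp, Finset.mem_filter]
  exact and_congr_right fun _ => ⟨(reachP_symm h).trans, h.trans⟩

lemma mem_comp_self_iff : x ∈ comp V E x ↔ x ∈ V := by
  simp only [comp, Finset.mem_filter]
  exact and_iff_left reachP_refl

end Reachability

def compFlip (V : Finset ℕ) (E : Finset PEdge) (x : ℕ) : ℕ := flipMap (comp V E x) x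

def dualEdge (V : Finset ℕ) (E : Finset PEdge) (e : PEdge) : PEdge :=
  (compFlip V E e.2, compFlip V E e.1)

section CompFlip

variable {V : Finset ℕ} {E S : Finset PEdge} {x : ℕ}

lemma compFlip_mem_comp (hx : x ∈ V) : compFlip V E x ∈ comp V E x :=
  flipMap_mem (mem_comp_self_iff.mpr hx)

lemma compFlip_mem (hx : x ∈ V) : compFlip V E x ∈ V :=
  (Finset.mem_filter.mp (compFlip_mem_comp hx)).1

lemma reachP_compFlip : reachP E x (compFlip V E x) := by
  by_cases hx : x ∈ V
  · exact (Finset.mem_filter.mp (compFlip_mem_comp hx)).2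
  · rw [compFlip, flipMap, dif_neg (mt mem_comp_self_iff.mp hx)]
    exact reachP_refl

lemma compFlip_involutive : Function.Involutive (compFlip V E) := by
  intro x
  rw [compFlip, ← comp_eq_of_reachP reachP_compFlip]
  exact flipMap_involutive _ x

lemma dualEdge_involutive : Function.Involutive (dualEdge V E) := by
  intro e
  simp only [dualEdge, compFlip_involutive _]

lemma compFlip_lt_compFlip {e : PEdge} (he : e ∈ E) (h1 : e.1 ∈ V) (h2 : e.2 ∈ V)
    (hlt : e.1 < e.2) : compFlip V E e.2 < compFlip V E e.1 := by
  have hcomp : comp V E e.1 = comp V E e.2 := comp_eq_of_reachP (reachP_of_mem he)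
  rw [compFlip, compFlip, ← hcomp]
  exact flipMap_lt_flipMap (mem_comp_self_iff.mpr h1) (hcomp ▸ mem_comp_self_iff.mpr h2) hlt

lemma adjP_image_dualEdge {a b : ℕ} :
    adjP (S.image (dualEdge V E)) a b ↔ adjP S (compFlip V E a) (compFlip V E b) := by
  simp only [adjP, Finset.mem_image_of_involutive dualEdge_involutive, dualEdge, or_comm]

lemma reachP_image_dualEdge {a b : ℕ} :
    reachP (S.image (dualEdge V E)) a b ↔ reachP S (compFlip V E a) (compFlip V E b) := by
  refine ⟨Relation.ReflTransGen.lift (compFlip V E) (fun _ _ => adjP_image_dualEdge.mp) _ _,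
    fun h => ?_⟩
  rw [← compFlip_involutive (V := V) (E := E) a, ← compFlip_involutive (V := V) (E := E) b]
  refine Relation.ReflTransGen.lift (compFlip V E) (fun c d hcd => ?_) _ _ h
  show adjP _ (compFlip V E c) (compFlip V E d)
  rwa [adjP_image_dualEdge, compFlip_involutive, compFlip_involutive]

lemma comp_image_dualEdge : comp V (E.image (dualEdge V E)) = comp V E := by
  ext x y
  simp only [comp, Finset.mem_filter, reachP_image_dualEdge]
  exact and_congr_right fun _ =>
    ⟨fun h => (reachP_compFlip.trans h).trans (reachP_symm reachP_compFlip),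
     fun h => ((reachP_symm reachP_compFlip).trans h).trans reachP_compFlip⟩

lemma compFlip_image_dualEdge : compFlip V (E.image (dualEdge V E)) = compFlip V E := by
  ext x
  rw [compFlip, comp_image_dualEdge, compFlip]

end CompFlip

attribute [ext] PreGraph

section Dual

variable {G : PreGraph}

lemma cdual_V : (cdual G).V = G.V := rfl

lemma cdual_E : (cdual G).E = G.E.image (dualEdge G.V G.E) := by
  refine Finset.image_congr fun e he => ?_
  have hcomp := comp_eq_of_reachP (V := G.V) (reachP_of_mem (Finset.mem_coe.mp he))
  simp only [dualEdge, compFlip, hcomp]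

lemma cdual_t_of_mem {x : ℕ} (hx : x ∈ G.V) : (cdual G).t x = 3 - G.t (compFlip G.V G.E x) :=
  if_pos hx

lemma cdual_t_of_not_mem {x : ℕ} (hx : x ∉ G.V) : (cdual G).t x = G.t x :=
  if_neg hx

lemma cdual_cdual (ht : ∀ v ∈ G.V, G.t v ≤ 3) : cdual (cdual G) = G := by
  have hE : (cdual G).E = G.E.image (dualEdge G.V G.E) := cdual_E
  have hflip : compFlip (cdual G).V (cdual G).E = compFlip G.V G.E := by
    rw [hE, cdual_V, compFlip_image_dualEdge]
  have hdual : dualEdge (cdual G).V (cdual G).E = dualEdge G.V G.E := by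
    funext e
    simp only [dualEdge, hflip]
  ext1
  · rfl
  · rw [cdual_E, hdual, hE, Finset.image_image, dualEdge_involutive.comp_self, Finset.image_id]
  · funext x
    by_cases hx : x ∈ G.V
    · rw [cdual_t_of_mem (G := cdual G) hx, hflip, cdual_t_of_mem (compFlip_mem hx),
        compFlip_involutive]
      have := ht x hx
      omega
    · rw [cdual_t_of_not_mem (G := cdual G) hx, cdual_t_of_not_mem hx]

lemma isTiered_cdual (hG : IsTiered G) : IsTiered (cdual G) := by
  obtain ⟨hpos, hE, ht12, htlt⟩ := hG
  refine ⟨hpos, ?_, ?_, ?_⟩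
  · intro e' he'
    rw [cdual_E] at he'
    obtain ⟨e, he, rfl⟩ := Finset.mem_image.mp he'
    obtain ⟨h1, h2, hlt⟩ := hE e he
    exact ⟨compFlip_mem h2, compFlip_mem h1, compFlip_lt_compFlip he h1 h2 hlt⟩
  · intro v hv
    rw [cdual_t_of_mem (G := G) hv]
    rcases ht12 _ (compFlip_mem (E := G.E) hv) with h | h <;> omega
  · intro e' he'
    rw [cdual_E] at he'
    obtain ⟨e, he, rfl⟩ := Finset.mem_image.mp he'
    obtain ⟨h1, h2, -⟩ := hE e he
    simp only [dualEdge]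
    rw [cdual_t_of_mem (compFlip_mem h1), cdual_t_of_mem (compFlip_mem h2),
      compFlip_involutive, compFlip_involutive]
    have := htlt e he
    rcases ht12 _ h1 with h | h <;> rcases ht12 _ h2 with h' | h' <;> omega

lemma isForest_cdual (hG : IsForest G) : IsForest (cdual G) := by
  intro e' he' hreach
  rw [cdual_E] at he' hreach
  obtain ⟨e, he, rfl⟩ := Finset.mem_image.mp he'
  rw [← Finset.image_erase dualEdge_involutive.injective, reachP_image_dualEdge] at hreach
  simp only [dualEdge, compFlip_involutive _] at hreach
  exact hG e he (reachP_symm hreach)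

lemma card_filter_cdual_t {j : ℕ} (hj : j < 3) :
    (G.V.filter fun v => (cdual G).t v = 3 - j).card = (G.V.filter fun v => G.t v = j).card := by
  rw [← Finset.card_filter_comp_of_involutive compFlip_involutive
    (fun _ => compFlip_mem (E := G.E)) (fun v => G.t v = j)]
  congr 1
  refine Finset.filter_congr fun v hv => ?_
  rw [cdual_t_of_mem hv]
  omega

end Dual

lemma cdual_mem_forestSet {U : Finset ℕ} {p1 p2 : ℕ} {F : PreGraph}
    (hF : F ∈ ForestSet U p1 p2) : cdual F ∈ ForestSet U p2 p1 := by
  obtain ⟨rfl, htiered, hforest, hc1, hc2, hoff⟩ := hF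
  refine ⟨rfl, isTiered_cdual htiered, isForest_cdual hforest, ?_, ?_,
    fun v hv => (cdual_t_of_not_mem hv).trans (hoff v hv)⟩
  · simpa [← hc2] using card_filter_cdual_t (G := F) (j := 2) (by norm_num)
  · simpa [← hc1] using card_filter_cdual_t (G := F) (j := 1) (by norm_num)

lemma cdual_cdual_of_mem_forestSet {U : Finset ℕ} {p1 p2 : ℕ} {F : PreGraph}
    (hF : F ∈ ForestSet U p1 p2) : cdual (cdual F) = F := by
  obtain ⟨-, ⟨-, -, ht12, -⟩, -⟩ := hF
  exact cdual_cdual fun v hv => by rcases ht12 v hv with h | h <;> omega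

theorem stmt5_general (U : Finset ℕ) (p1 p2 : ℕ) :
    Set.BijOn cdual (ForestSet U p1 p2) (ForestSet U p2 p1) :=
  Set.InvOn.bijOn ⟨fun _ => cdual_cdual_of_mem_forestSet, fun _ => cdual_cdual_of_mem_forestSet⟩
    (fun _ => cdual_mem_forestSet) (fun _ => cdual_mem_forestSet)

/-- `F ↦ F'` is a bijection from tiered forests on `U` with tier sizes
`(p1, p2)` to tiered forests on `U` with tier sizes `(p2, p1)`. -/
theorem stmt5 (U : Finset ℕ) (hU : U.Nonempty) (hpos : ∀ v ∈ U, 0 < v)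
    (p1 p2 : ℕ) (hp : p1 + p2 = U.card) :
    Set.BijOn cdual (ForestSet U p1 p2) (ForestSet U p2 p1) :=
  stmt5_general U p1 p2

end
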